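/- arXiv:2502.08039 — 4 statements merged into one kernel-verified Lean document; each statement's English description precedes it below -/
import Mathlib

section
/- Any two elements σ, τ of the symmetric group S_k have a unique least upper bound (join) with respect to the weak right Bruhat order: there exists Δ ∈ S_k with σ ≤ Δ and τ ≤ Δ, and such that any ω with σ ≤ ω and τ ≤ ω satisfies Δ ≤ ω. -/
namespace WeakBruhat

def IsAdjWord (k : ℕ) (w : List (Equiv.Perm (Fin k))) : Prop :=
  ∀ s ∈ w, ∃ i : ℕ, ∃ h : i + 1 < k,
    s = Equiv.swap ⟨i, Nat.lt_of_succ_lt h⟩ ⟨i + 1, h⟩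

/-- Coxeter length: minimal length of a word in adjacent transpositions. -/
noncomputable def len {k : ℕ} (σ : Equiv.Perm (Fin k)) : ℕ :=
  sInf {m | ∃ w : List (Equiv.Perm (Fin k)), IsAdjWord k w ∧ w.length = m ∧ w.prod = σ}

def IsReducedWord {k : ℕ} (σ : Equiv.Perm (Fin k)) (w : List (Equiv.Perm (Fin k))) : Prop :=
  IsAdjWord k w ∧ w.prod = σ ∧ w.length = len σ

/-- Weak right Bruhat order: some reduced word for `τ` begins with a reduced word for `σ`. -/
def WeakLE {k : ℕ} (σ τ : Equiv.Perm (Fin k)) : Prop :=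
  ∃ w₁ w₂ : List (Equiv.Perm (Fin k)), IsReducedWord σ w₁ ∧ IsReducedWord τ (w₁ ++ w₂)

/-- Left inversion set: pairs (a,b) with a < b and σ⁻¹(a) > σ⁻¹(b). -/
def InvSet {k : ℕ} (σ : Equiv.Perm (Fin k)) : Set (Fin k × Fin k) :=
  {p | p.1 < p.2 ∧ σ⁻¹ p.2 < σ⁻¹ p.1}

/-- The adjacent transposition `s_i = (i, i+1)` in `S_k` (0-indexed positions). -/
def adj (k i : ℕ) (h : i + 1 < k) : Equiv.Perm (Fin k) :=
  Equiv.swap ⟨i, Nat.lt_of_succ_lt h⟩ ⟨i + 1, h⟩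

/-- `Δ` is the join (least upper bound) of `σ` and `τ` in the weak right Bruhat order. -/
def IsJoin {k : ℕ} (σ τ Δ : Equiv.Perm (Fin k)) : Prop :=
  WeakLE σ Δ ∧ WeakLE τ Δ ∧ ∀ ω : Equiv.Perm (Fin k), WeakLE σ ω → WeakLE τ ω → WeakLE Δ ω

/-!
A permutation is determined by its left inversion set `InvSet σ`, and both the length and the
weak order are read off from it. Right multiplication by an adjacent transposition adds or removes
exactly one inversion, so `len σ` is the number of inversions. If `InvSet σ ⊊ InvSet τ`, some ascent
of `σ` is an inversion of `τ`; multiplying by that transposition climbs towards `τ`, which gives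
`σ ≤ τ ↔ InvSet σ ⊆ InvSet τ`.

A set `R` of pairs `a < b` is an inversion set iff it is transitive and, for `a < b < c`,
`R a c` forces `R a b` or `R b c`: then "`a` before `b`" is a strict total order on `Fin k`, and
sorting by it yields the permutation. The transitive closure of `InvSet σ ∪ InvSet τ` keeps both
properties, and the permutation it defines is the join.
-/

open Equiv Relation

variable {k : ℕ}

lemma strictMono_fin_of_lt_succ {α : Type*} [Preorder α] {f : Fin k → α}
    (h : ∀ x y : Fin k, x.val + 1 = y.val → f x < f y) : StrictMono f := by
  cases k with
  | zero => exact fun x => x.elim0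
  | succ n => exact Fin.strictMono_iff_lt_succ.2 fun x => h _ _ rfl

lemma lt_of_val_add_one_eq {x y : Fin k} (hxy : x.val + 1 = y.val) : x < y :=
  Fin.lt_def.2 (by omega)

section InversionSets

variable {σ τ : Perm (Fin k)}

lemma notMem_invSet_one (p : Fin k × Fin k) : p ∉ InvSet (1 : Perm (Fin k)) :=
  fun h => h.1.asymm h.2

lemma mem_invSet_trans {a b c : Fin k} (hab : (a, b) ∈ InvSet σ) (hbc : (b, c) ∈ InvSet σ) :
    (a, c) ∈ InvSet σ :=
  ⟨hab.1.trans hbc.1, hbc.2.trans hab.2⟩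

lemma inv_apply_lt_of_notMem_invSet {a b : Fin k} (hab : a < b) (h : (a, b) ∉ InvSet σ) :
    σ⁻¹ a < σ⁻¹ b :=
  (not_lt.1 fun h' => h ⟨hab, h'⟩).lt_of_ne (σ⁻¹.injective.ne hab.ne)

lemma mem_invSet_or_mem_invSet {a b c : Fin k} (hab : a < b) (hbc : b < c)
    (hac : (a, c) ∈ InvSet σ) : (a, b) ∈ InvSet σ ∨ (b, c) ∈ InvSet σ := by
  by_contra! h
  exact ((inv_apply_lt_of_notMem_invSet hab h.1).trans
    (inv_apply_lt_of_notMem_invSet hbc h.2)).asymm hac.2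

lemma apply_mk_notMem_invSet (σ : Perm (Fin k)) {x y : Fin k} (hxy : x < y) :
    (σ x, σ y) ∉ InvSet σ :=
  fun h => hxy.asymm (by simpa using h.2)

lemma apply_mk_mem_invSet {x y : Fin k} (hxy : x < y) (h : σ y < σ x) : (σ y, σ x) ∈ InvSet σ :=
  ⟨h, by simpa using hxy⟩

lemma eq_of_forall_inv_apply_lt (h : ∀ x y : Fin k, x.val + 1 = y.val → τ⁻¹ (σ x) < τ⁻¹ (σ y)) :
    σ = τ := by
  have hid : τ⁻¹ * σ = 1 := DFunLike.coe_injective (strictMono_fin_of_lt_succ h).eq_id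
  exact (inv_mul_eq_one.1 hid).symm

lemma exists_ascent_mem_invSet (hsub : InvSet σ ⊆ InvSet τ) (hne : σ ≠ τ) :
    ∃ x y : Fin k, x.val + 1 = y.val ∧ σ x < σ y ∧ (σ x, σ y) ∈ InvSet τ := by
  -- otherwise `τ⁻¹ * σ` would increase at every position, hence be the identity
  by_contra! h
  refine hne (eq_of_forall_inv_apply_lt fun x y hxy => ?_)
  have hlt := lt_of_val_add_one_eq hxy
  rcases (σ.injective.ne hlt.ne).lt_or_gt with hasc | hdesc
  · exact inv_apply_lt_of_notMem_invSet hasc (h x y hxy hasc)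
  · exact (hsub (apply_mk_mem_invSet hlt hdesc)).2

lemma eq_of_invSet_eq (h : InvSet σ = InvSet τ) : σ = τ := by
  by_contra hne
  obtain ⟨x, y, hxy, -, hmem⟩ := exists_ascent_mem_invSet h.le hne
  exact apply_mk_notMem_invSet σ (lt_of_val_add_one_eq hxy) (h ▸ hmem)

end InversionSets

noncomputable def invCount (σ : Perm (Fin k)) : ℕ := (InvSet σ).ncard

lemma invCount_one : invCount (1 : Perm (Fin k)) = 0 := by
  rw [invCount, Set.eq_empty_of_forall_notMem notMem_invSet_one, Set.ncard_empty]

section AdjacentTranspositions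

variable {σ : Perm (Fin k)} {x y : Fin k}

lemma swap_apply_lt_swap_apply_iff (hxy : x.val + 1 = y.val) {p q : Fin k}
    (hpq : ¬(p = x ∧ q = y)) (hqp : ¬(p = y ∧ q = x)) :
    swap x y p < swap x y q ↔ p < q := by
  simp only [swap_apply_def, Fin.ext_iff, Fin.lt_def] at hpq hqp ⊢
  split_ifs <;> omega

lemma invSet_mul_swap (hxy : x.val + 1 = y.val) (hasc : σ x < σ y) :
    InvSet (σ * swap x y) = insert (σ x, σ y) (InvSet σ) := by
  have hlt := lt_of_val_add_one_eq hxy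
  ext ⟨a, b⟩
  obtain ⟨p, rfl⟩ := σ.surjective a
  obtain ⟨q, rfl⟩ := σ.surjective b
  simp only [InvSet, Set.mem_ofPred_eq, Set.mem_insert_iff, Prod.mk.injEq, mul_inv_rev, swap_inv,
    Perm.mul_apply, Perm.coe_inv, symm_apply_apply, σ.injective.eq_iff]
  by_cases hpq : p = x ∧ q = y
  · obtain ⟨rfl, rfl⟩ := hpq
    simp [hasc, hlt]
  by_cases hqp : p = y ∧ q = x
  · obtain ⟨rfl, rfl⟩ := hqp
    simp [hasc.asymm, hlt.ne']
  rw [swap_apply_lt_swap_apply_iff hxy (by tauto) (by tauto)]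
  tauto

lemma invCount_mul_swap (hxy : x.val + 1 = y.val) (hasc : σ x < σ y) :
    invCount (σ * swap x y) = invCount σ + 1 := by
  rw [invCount, invSet_mul_swap hxy hasc,
    Set.ncard_insert_of_notMem (apply_mk_notMem_invSet σ (lt_of_val_add_one_eq hxy))]
  rfl

lemma invCount_mul_swap_of_gt (hxy : x.val + 1 = y.val) (hdesc : σ y < σ x) :
    invCount (σ * swap x y) + 1 = invCount σ := by
  simpa [mul_swap_mul_self] using
    (invCount_mul_swap (σ := σ * swap x y) hxy (by simpa using hdesc)).symm

lemma invCount_mul_swap_le (hxy : x.val + 1 = y.val) (σ : Perm (Fin k)) :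
    invCount (σ * swap x y) ≤ invCount σ + 1 := by
  rcases (σ.injective.ne (lt_of_val_add_one_eq hxy).ne).lt_or_gt with hasc | hdesc
  · exact (invCount_mul_swap hxy hasc).le
  · have := invCount_mul_swap_of_gt hxy hdesc
    omega

lemma invSet_subset_mul_swap (hxy : x.val + 1 = y.val)
    (h : invCount (σ * swap x y) = invCount σ + 1) : InvSet σ ⊆ InvSet (σ * swap x y) := by
  rcases (σ.injective.ne (lt_of_val_add_one_eq hxy).ne).lt_or_gt with hasc | hdesc
  · rw [invSet_mul_swap hxy hasc]
    exact Set.subset_insert _ _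
  · have := invCount_mul_swap_of_gt hxy hdesc
    omega

lemma isAdjWord_cons_swap (hxy : x.val + 1 = y.val) {w : List (Perm (Fin k))}
    (hw : IsAdjWord k w) : IsAdjWord k (swap x y :: w) := by
  obtain ⟨i, hi⟩ := x
  obtain ⟨j, hj⟩ := y
  obtain rfl : i + 1 = j := hxy
  exact List.forall_mem_cons.2 ⟨⟨i, hj, rfl⟩, hw⟩

end AdjacentTranspositions

section Words

lemma invCount_mul_prod_le {w : List (Perm (Fin k))} (hw : IsAdjWord k w) (σ : Perm (Fin k)) :
    invCount (σ * w.prod) ≤ invCount σ + w.length := by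
  induction w generalizing σ with
  | nil => simp
  | cons s w ih =>
    obtain ⟨⟨i, hi, hs⟩, hw⟩ := List.forall_mem_cons.1 hw
    have h₁ := ih hw (σ * s)
    have h₂ : invCount (σ * s) ≤ invCount σ + 1 := hs ▸ invCount_mul_swap_le rfl σ
    rw [List.prod_cons, ← mul_assoc, List.length_cons]
    omega

lemma invSet_subset_mul_prod {w : List (Perm (Fin k))} (hw : IsAdjWord k w) {σ : Perm (Fin k)}
    (h : invCount (σ * w.prod) = invCount σ + w.length) : InvSet σ ⊆ InvSet (σ * w.prod) := by
  induction w generalizing σ with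
  | nil => simp
  | cons s w ih =>
    obtain ⟨⟨i, hi, hs⟩, hw⟩ := List.forall_mem_cons.1 hw
    rw [List.prod_cons, ← mul_assoc, List.length_cons] at h
    rw [List.prod_cons, ← mul_assoc]
    have h₁ := invCount_mul_prod_le hw (σ * s)
    have h₂ : invCount (σ * s) ≤ invCount σ + 1 := hs ▸ invCount_mul_swap_le rfl σ
    have hstep : InvSet σ ⊆ InvSet (σ * s) := by
      subst hs
      exact invSet_subset_mul_swap rfl (by omega)
    exact hstep.trans (ih hw (by omega))

lemma exists_isAdjWord_mul_prod_eq {σ τ : Perm (Fin k)} (hsub : InvSet σ ⊆ InvSet τ) :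
    ∃ w, IsAdjWord k w ∧ σ * w.prod = τ ∧ invCount σ + w.length = invCount τ := by
  by_cases hne : σ = τ
  · subst hne
    exact ⟨[], fun _ h => absurd h List.not_mem_nil, by simp, by simp⟩
  obtain ⟨x, y, hxy, hasc, hmem⟩ := exists_ascent_mem_invSet hsub hne
  have hsub' : InvSet (σ * swap x y) ⊆ InvSet τ := by
    rw [invSet_mul_swap hxy hasc]
    exact Set.insert_subset hmem hsub
  obtain ⟨w, hw, hprod, hlen⟩ := exists_isAdjWord_mul_prod_eq hsub'
  refine ⟨swap x y :: w, isAdjWord_cons_swap hxy hw, by rw [List.prod_cons, ← mul_assoc, hprod], ?_⟩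
  rw [invCount_mul_swap hxy hasc] at hlen
  rw [List.length_cons]
  omega
termination_by invCount τ - invCount σ
decreasing_by
  have := Set.ncard_le_ncard hsub'
  rw [← invCount, ← invCount, invCount_mul_swap hxy hasc] at this
  rw [invCount_mul_swap hxy hasc]
  omega

lemma exists_isAdjWord_prod_eq (σ : Perm (Fin k)) :
    ∃ w, IsAdjWord k w ∧ w.prod = σ ∧ w.length = invCount σ := by
  obtain ⟨w, hw, hprod, hlen⟩ :=
    exists_isAdjWord_mul_prod_eq (σ := 1) (τ := σ) fun p hp => (notMem_invSet_one p hp).elim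
  rw [one_mul] at hprod
  rw [invCount_one, zero_add] at hlen
  exact ⟨w, hw, hprod, hlen⟩

lemma len_eq_invCount (σ : Perm (Fin k)) : len σ = invCount σ := by
  obtain ⟨w, hw, hprod, hlen⟩ := exists_isAdjWord_prod_eq σ
  refine le_antisymm (Nat.sInf_le ⟨w, hw, hlen, hprod⟩) (le_csInf ⟨_, w, hw, hlen, hprod⟩ ?_)
  rintro m ⟨w', hw', rfl, rfl⟩
  simpa [invCount_one] using invCount_mul_prod_le hw' 1

end Words

section WeakOrder

variable {σ τ : Perm (Fin k)}

lemma invSet_subset_of_weakLE (h : WeakLE σ τ) : InvSet σ ⊆ InvSet τ := by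
  obtain ⟨w₁, w₂, ⟨-, rfl, hl₁⟩, hw, rfl, hl⟩ := h
  rw [List.prod_append]
  refine invSet_subset_mul_prod (List.forall_mem_append.1 hw).2 ?_
  rw [← len_eq_invCount, ← len_eq_invCount, ← hl₁, ← List.prod_append, ← hl, List.length_append]

lemma weakLE_of_invSet_subset (h : InvSet σ ⊆ InvSet τ) : WeakLE σ τ := by
  obtain ⟨w₁, hw₁, rfl, hl₁⟩ := exists_isAdjWord_prod_eq σ
  obtain ⟨w₂, hw₂, hprod, hl₂⟩ := exists_isAdjWord_mul_prod_eq h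
  refine ⟨w₁, w₂, ⟨hw₁, rfl, by rw [len_eq_invCount, hl₁]⟩, List.forall_mem_append.2 ⟨hw₁, hw₂⟩,
    by rw [List.prod_append, hprod], ?_⟩
  rw [len_eq_invCount, List.length_append, ← hl₂, hl₁]

lemma weakLE_iff_invSet_subset : WeakLE σ τ ↔ InvSet σ ⊆ InvSet τ :=
  ⟨invSet_subset_of_weakLE, weakLE_of_invSet_subset⟩

lemma WeakLE.antisymm (h₁ : WeakLE σ τ) (h₂ : WeakLE τ σ) : σ = τ :=
  eq_of_invSet_eq ((invSet_subset_of_weakLE h₁).antisymm (invSet_subset_of_weakLE h₂))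

end WeakOrder

section InversionRelations

variable {α : Type*} [LinearOrder α] {R : α → α → Prop}

lemma lt_of_transGen (hlt : ∀ a b, R a b → a < b) {a b : α} (h : TransGen R a b) : a < b := by
  induction h with
  | single h => exact hlt _ _ h
  | tail _ h ih => exact ih.trans (hlt _ _ h)

lemma transGen_or_transGen (hsplit : ∀ a b c, a < b → b < c → R a c → R a b ∨ R b c)
    {a b c : α} (hab : a < b) (hbc : b < c) (h : TransGen R a c) :
    TransGen R a b ∨ TransGen R b c := by
  induction h generalizing b with
  | single h => exact (hsplit _ _ _ hab hbc h).imp .single .single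
  | @tail d c had hdc ih =>
    rcases lt_trichotomy b d with hbd | rfl | hdb
    · exact (ih hab hbd).imp id (·.tail hdc)
    · exact .inl had
    · exact (hsplit _ _ _ hdb hbc hdc).imp had.tail .single

/-- When `R a b ↔ (a, b) ∈ InvSet π`, this says `π⁻¹ a < π⁻¹ b`: `a` stands to the left of `b`
in the one-line notation of `π`. -/
def LeftOf (R : α → α → Prop) (a b : α) : Prop := (a < b ∧ ¬R a b) ∨ (b < a ∧ R b a)

lemma leftOf_trans (htrans : ∀ a b c, R a b → R b c → R a c)
    (hsplit : ∀ a b c, a < b → b < c → R a c → R a b ∨ R b c) {a b c : α}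
    (hab : LeftOf R a b) (hbc : LeftOf R b c) : LeftOf R a c := by
  rcases hab with ⟨hab, hnab⟩ | ⟨hba, hba'⟩ <;> rcases hbc with ⟨hbc, hnbc⟩ | ⟨hcb, hcb'⟩
  · exact .inl ⟨hab.trans hbc, fun h => (hsplit _ _ _ hab hbc h).elim hnab hnbc⟩
  · rcases lt_trichotomy a c with hac | rfl | hca
    · exact .inl ⟨hac, fun h => hnab (htrans _ _ _ h hcb')⟩
    · exact absurd hcb' hnab
    · exact .inr ⟨hca, (hsplit _ _ _ hca hab hcb').resolve_right hnab⟩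
  · rcases lt_trichotomy a c with hac | rfl | hca
    · exact .inl ⟨hac, fun h => hnbc (htrans _ _ _ hba' h)⟩
    · exact absurd hba' hnbc
    · exact .inr ⟨hca, (hsplit _ _ _ hbc hca hba').resolve_left hnbc⟩
  · exact .inr ⟨hcb.trans hba, htrans _ _ _ hcb' hba'⟩

lemma isStrictTotalOrder_leftOf (htrans : ∀ a b c, R a b → R b c → R a c)
    (hsplit : ∀ a b c, a < b → b < c → R a c → R a b ∨ R b c) :
    IsStrictTotalOrder α (LeftOf R) where
  irrefl a h := by rcases h with ⟨h, -⟩ | ⟨h, -⟩ <;> exact h.false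
  trans _ _ _ := leftOf_trans htrans hsplit
  trichotomous a b := by
    unfold LeftOf
    rcases lt_trichotomy a b with h | h | h <;> by_cases R a b <;> by_cases R b a <;> simp_all

end InversionRelations

lemma exists_perm_lt_iff (r : Fin k → Fin k → Prop) [IsStrictTotalOrder (Fin k) r] :
    ∃ e : Perm (Fin k), ∀ a b, e a < e b ↔ r a b := by
  classical
  let o := linearOrderOfSTO r
  let e := @Fintype.orderIsoFinOfCardEq (Fin k) o _ k (Fintype.card_fin k)
  refine ⟨e.toEquiv.symm, fun a b => ?_⟩
  have h := (@OrderIso.lt_iff_lt (Fin k) (Fin k) _ o.toPreorder e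
    (e.toEquiv.symm a) (e.toEquiv.symm b)).symm
  simp only [OrderIso.coe_symm_toEquiv, OrderIso.apply_symm_apply] at h
  exact h

lemma exists_invSet_eq {R : Fin k → Fin k → Prop} (hlt : ∀ a b, R a b → a < b)
    (htrans : ∀ a b c, R a b → R b c → R a c)
    (hsplit : ∀ a b c, a < b → b < c → R a c → R a b ∨ R b c) :
    ∃ π : Perm (Fin k), InvSet π = {p | R p.1 p.2} := by
  have := isStrictTotalOrder_leftOf htrans hsplit
  obtain ⟨e, he⟩ := exists_perm_lt_iff (LeftOf R)
  refine ⟨e⁻¹, Set.ext fun ⟨a, b⟩ => ?_⟩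
  simp only [InvSet, Set.mem_ofPred_eq, inv_inv, he, LeftOf]
  constructor
  · rintro ⟨hab, ⟨hba, -⟩ | ⟨-, h⟩⟩
    · exact absurd hab hba.asymm
    · exact h
  · exact fun h => ⟨hlt _ _ h, .inr ⟨hlt _ _ h, h⟩⟩

lemma exists_invSet_eq_transGen (σ τ : Perm (Fin k)) :
    ∃ Δ : Perm (Fin k),
      InvSet Δ = {p | TransGen (fun a b => (a, b) ∈ InvSet σ ∪ InvSet τ) p.1 p.2} := by
  refine exists_invSet_eq (fun _ _ => lt_of_transGen fun _ _ h => h.elim (·.1) (·.1))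
    (fun _ _ _ => TransGen.trans) (fun _ _ _ hab hbc => transGen_or_transGen ?_ hab hbc)
  rintro a b c hab hbc (h | h)
  · exact (mem_invSet_or_mem_invSet hab hbc h).imp Or.inl Or.inl
  · exact (mem_invSet_or_mem_invSet hab hbc h).imp Or.inr Or.inr

section Join

variable {σ τ : Perm (Fin k)}

lemma isJoin_of_invSet_eq {Δ : Perm (Fin k)}
    (hΔ : InvSet Δ = {p | TransGen (fun a b => (a, b) ∈ InvSet σ ∪ InvSet τ) p.1 p.2}) :
    IsJoin σ τ Δ := by
  simp only [IsJoin, weakLE_iff_invSet_subset, hΔ]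
  refine ⟨fun p hp => .single (Or.inl hp), fun p hp => .single (Or.inr hp), ?_⟩
  rintro ω hσ hτ ⟨a, b⟩ (h : TransGen _ a b)
  induction h with
  | single h => exact Set.union_subset hσ hτ h
  | tail _ h ih => exact mem_invSet_trans ih (Set.union_subset hσ hτ h)

lemma IsJoin.unique {Δ₁ Δ₂ : Perm (Fin k)} (h₁ : IsJoin σ τ Δ₁) (h₂ : IsJoin σ τ Δ₂) : Δ₁ = Δ₂ :=
  (h₁.2.2 _ h₂.1 h₂.2.1).antisymm (h₂.2.2 _ h₁.1 h₁.2.1)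

end Join

theorem stmt3 {k : ℕ} (σ τ : Equiv.Perm (Fin k)) :
    ∃! Δ : Equiv.Perm (Fin k),
      WeakLE σ Δ ∧ WeakLE τ Δ ∧
        ∀ ω : Equiv.Perm (Fin k), WeakLE σ ω → WeakLE τ ω → WeakLE Δ ω := by
  obtain ⟨Δ, hΔ⟩ := exists_invSet_eq_transGen σ τ
  have hjoin : IsJoin σ τ Δ := isJoin_of_invSet_eq hΔ
  exact ⟨Δ, hjoin, fun Δ' h => IsJoin.unique h hjoin⟩

end WeakBruhat
end

section
/- Let A be an associative algebra over ℂ(q) and let x, y ∈ A. If the quantum Serre relation S_{q,n}(x,y) = 0 holds, then S_{q,n+2}(x,y) = 0 also holds. -/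
/-!
Put `S^ζ_n(x,y) = ∑_{i+j=n} (-ζ)^i [i+j choose i]_q x^i y x^j`, so that `S_{q,n} = S^1_n`. For
`r = q^{±1}` the quantum integers satisfy `[i+j] = r^{-i} [j] + r^j [i]`, which splits the Gaussian
binomial into two halves and yields the one-step recursion
`S^ζ_{n+1} = S^{ζ/r}_n x - ζ r^n x S^{ζ/r}_n`.
Taking `r = q, ζ = 1` expresses `S_{n+2}` through `S^{q⁻¹}_{n+1}`, and taking `r = q⁻¹, ζ = q⁻¹`
expresses that through `S_n`; hence `S_n = 0` forces `S_{n+2} = 0`. In other words, `S_n` is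
`∏_k (R - q^{n-1-2k} L)` applied to `y`, for the commuting operators `L`, `R` of left and right
multiplication by `x`, and the factors for `n + 2` are those for `n` together with `q^{±(n+1)}`.
-/

noncomputable section

/-- The field ℂ(q) of rational functions. -/
abbrev Fq : Type := RatFunc ℂ

/-- The indeterminate q. -/
def qv : Fq := RatFunc.X

/-- Balanced quantum integer [m]_q = (q^m - q^{-m})/(q - q⁻¹). -/
def qInt (m : ℕ) : Fq := (qv ^ m - qv⁻¹ ^ m) / (qv - qv⁻¹)

/-- Quantum factorial. -/
def qFact : ℕ → Fq
  | 0 => 1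
  | n + 1 => qInt (n + 1) * qFact n

/-- Balanced Gaussian binomial coefficient. -/
def qBinom (n i : ℕ) : Fq := qFact n / (qFact i * qFact (n - i))

/-- The n-th quantum Serre operator S_{q,n}(x,y). -/
def Sq (A : Type*) [Ring A] [Algebra Fq A] (n : ℕ) (x y : A) : A :=
  ∑ i ∈ Finset.range (n + 1), ((-1 : Fq) ^ i * qBinom n i) • (x ^ i * y * x ^ (n - i))

open Finset

lemma qv_ne_zero : qv ≠ 0 := RatFunc.X_ne_zero

lemma qv_pow_sub_inv_pow_ne_zero {m : ℕ} (hm : m ≠ 0) : qv ^ m - qv⁻¹ ^ m ≠ 0 := by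
  intro h
  have hpow : qv ^ (2 * m) = 1 := by
    rw [two_mul, pow_add]
    nth_rw 1 [sub_eq_zero.mp h]
    rw [← mul_pow, inv_mul_cancel₀ qv_ne_zero, one_pow]
  exact (RatFunc.transcendental_X.pow (by omega : 0 < 2 * m)) (hpow ▸ isAlgebraic_one)

lemma qInt_ne_zero {m : ℕ} (hm : m ≠ 0) : qInt m ≠ 0 :=
  div_ne_zero (qv_pow_sub_inv_pow_ne_zero hm) (by simpa using qv_pow_sub_inv_pow_ne_zero one_ne_zero)

lemma qInt_zero : qInt 0 = 0 := by simp [qInt]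

lemma qFact_ne_zero (n : ℕ) : qFact n ≠ 0 := by
  induction n with
  | zero => exact one_ne_zero
  | succ n ih => exact mul_ne_zero (qInt_ne_zero n.succ_ne_zero) ih

lemma qInt_add {r : Fq} (hr : r = qv ∨ r = qv⁻¹) (a b : ℕ) :
    qInt (a + b) = r⁻¹ ^ a * qInt b + r ^ b * qInt a := by
  rcases hr with rfl | rfl
  · simp only [qInt]; ring
  · simp only [qInt, inv_inv]; ring

lemma qBinom_add_left (i j : ℕ) : qBinom (i + j) i = qFact (i + j) / (qFact i * qFact j) := by
  rw [qBinom, Nat.add_sub_cancel_left]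

lemma qBinom_mul_qInt_div_of_succ_right (i j : ℕ) :
    qBinom (i + (j + 1)) i * qInt (j + 1) / qInt (i + (j + 1)) = qBinom (i + j) i := by
  have := qFact_ne_zero i
  have := qFact_ne_zero j
  have := qInt_ne_zero j.succ_ne_zero
  have := qInt_ne_zero (i + j).succ_ne_zero
  rw [qBinom_add_left, qBinom_add_left, ← add_assoc]
  simp only [qFact]
  field_simp

lemma qBinom_mul_qInt_div_of_succ_left (i j : ℕ) :
    qBinom (i + 1 + j) (i + 1) * qInt (i + 1) / qInt (i + 1 + j) = qBinom (i + j) i := by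
  have := qFact_ne_zero i
  have := qFact_ne_zero j
  have := qInt_ne_zero i.succ_ne_zero
  have := qInt_ne_zero (i + j).succ_ne_zero
  rw [qBinom_add_left, qBinom_add_left, add_right_comm]
  simp only [qFact]
  field_simp

lemma qBinom_pascal {r : Fq} (hr : r = qv ∨ r = qv⁻¹) {i j : ℕ} (hij : i + j ≠ 0) :
    qBinom (i + j) i = r⁻¹ ^ i * (qBinom (i + j) i * qInt j / qInt (i + j))
      + r ^ j * (qBinom (i + j) i * qInt i / qInt (i + j)) := by
  have := qInt_ne_zero hij
  field_simp
  rw [qInt_add hr]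
  ring

lemma sum_antidiagonal_succ_add {M : Type*} [AddCommMonoid M] {n : ℕ} (f g : ℕ × ℕ → M)
    (hf : f (n + 1, 0) = 0) (hg : g (0, n + 1) = 0) :
    ∑ p ∈ antidiagonal (n + 1), (f p + g p) =
      ∑ p ∈ antidiagonal n, f (p.1, p.2 + 1) + ∑ p ∈ antidiagonal n, g (p.1 + 1, p.2) := by
  rw [sum_add_distrib, Nat.sum_antidiagonal_succ', Nat.sum_antidiagonal_succ, hf, hg,
    zero_add, zero_add]

def twistedSerre (A : Type*) [Ring A] [Algebra Fq A] (n : ℕ) (ζ : Fq) (x y : A) : A :=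
  ∑ p ∈ antidiagonal n, ((-ζ) ^ p.1 * qBinom (p.1 + p.2) p.1) • (x ^ p.1 * y * x ^ p.2)

section

variable {A : Type*} [Ring A] [Algebra Fq A]

lemma Sq_eq_twistedSerre_one (n : ℕ) (x y : A) : Sq A n x y = twistedSerre A n 1 x y := by
  rw [twistedSerre, Nat.sum_antidiagonal_eq_sum_range_succ
    (fun i j => ((-1 : Fq) ^ i * qBinom (i + j) i) • (x ^ i * y * x ^ j))]
  refine sum_congr rfl fun i hi => ?_
  rw [Nat.add_sub_cancel' (Nat.lt_succ_iff.mp (mem_range.mp hi))]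

lemma twistedSerre_succ {r : Fq} (hr : r = qv ∨ r = qv⁻¹) (n : ℕ) (ζ : Fq) (x y : A) :
    twistedSerre A (n + 1) ζ x y =
      twistedSerre A n (ζ * r⁻¹) x y * x - (ζ * r ^ n) • (x * twistedSerre A n (ζ * r⁻¹) x y) := by
  have hr0 : r ≠ 0 := by rcases hr with rfl | rfl <;> simp [qv_ne_zero]
  -- The two halves of the Pascal split. The factor `[j]` (resp. `[i]`) kills `f` at `j = 0`
  -- (resp. `g` at `i = 0`), and elsewhere `[i+j choose i] [j] / [i+j] = [i+j-1 choose i]`.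
  let f : ℕ × ℕ → A := fun p => ((-(ζ * r⁻¹)) ^ p.1 *
    (qBinom (p.1 + p.2) p.1 * qInt p.2 / qInt (p.1 + p.2))) • (x ^ p.1 * y * x ^ p.2)
  let g : ℕ × ℕ → A := fun p => (r ^ p.2 * (-ζ) ^ p.1 *
    (qBinom (p.1 + p.2) p.1 * qInt p.1 / qInt (p.1 + p.2))) • (x ^ p.1 * y * x ^ p.2)
  have hsplit : twistedSerre A (n + 1) ζ x y = ∑ p ∈ antidiagonal (n + 1), (f p + g p) := by
    refine sum_congr rfl fun p hp => ?_
    have hp0 : p.1 + p.2 ≠ 0 := by rw [mem_antidiagonal.mp hp]; exact n.succ_ne_zero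
    simp only [f, g, ← add_smul]
    congr 1
    nth_rw 1 [qBinom_pascal hr hp0]
    ring
  rw [hsplit, sum_antidiagonal_succ_add f g (by simp [f, qInt_zero]) (by simp [g, qInt_zero]),
    twistedSerre, sum_mul, mul_sum, smul_sum, sub_eq_add_neg, ← sum_neg_distrib]
  congr 1 <;> refine sum_congr rfl fun p hp => ?_
  · simp only [f, qBinom_mul_qInt_div_of_succ_right, smul_mul_assoc, pow_succ, mul_assoc]
  · simp only [g, qBinom_mul_qInt_div_of_succ_left, mul_smul_comm, smul_smul, ← neg_smul]
    have hx : x * (x ^ p.1 * y * x ^ p.2) = x ^ (p.1 + 1) * y * x ^ p.2 := by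
      simp only [pow_succ', mul_assoc]
    rw [← mem_antidiagonal.mp hp, hx]
    congr 1
    have hinv : r ^ p.1 * r⁻¹ ^ p.1 = 1 := by rw [← mul_pow, mul_inv_cancel₀ hr0, one_pow]
    linear_combination (ζ * (-ζ) ^ p.1 * r ^ p.2 * qBinom (p.1 + p.2) p.1) * hinv

end

theorem stmt7 (A : Type*) [Ring A] [Algebra Fq A] (x y : A) (n : ℕ)
    (h : Sq A n x y = 0) : Sq A (n + 2) x y = 0 := by
  have hmid : twistedSerre A (n + 1) qv⁻¹ x y = 0 := by
    rw [twistedSerre_succ (Or.inr rfl), inv_inv, inv_mul_cancel₀ qv_ne_zero,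
      ← Sq_eq_twistedSerre_one, h, zero_mul, mul_zero, smul_zero, sub_zero]
  rw [Sq_eq_twistedSerre_one, twistedSerre_succ (Or.inl rfl), one_mul, hmid, zero_mul, mul_zero,
    smul_zero, sub_zero]

end
end

section
/- Let q be a nonzero complex number which is not a root of unity, and consider the vector space V with basis given by nonincreasing sequences (k_n, …, k₁) of nonnegative integers of length n, with operators E₁(k_n,…,k₁) = (k_n,…,k₁+1), E_i(k_n,…,k₁) = ([k_i+1-k_{i-1}]_q/[k_i+1]_q)(k_n,…,k_i+1,…,k₁) for i > 1, and E₀(k_n,…,k₁) = (a q^{1-k_n} ∏_{i=1}^n [k_i]_q / (1-q²)) (k_n-1,…,k₁-1), where a sequence that is not nonincreasing or has a negative entry is interpreted as the zero vector. Then E₀ commutes with E_i for all 2 ≤ i ≤ n-1, and E₀ and E_n satisfy E_n² E₀ - (q+q⁻¹) E_n E₀ E_n + E₀ E_n² = 0. -/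
noncomputable section

/-- Balanced quantum integer [m]_q = (q^m - q^{-m})/(q - q⁻¹) for q ∈ ℂ. -/
def qint (q : ℂ) (m : ℤ) : ℂ := (q ^ m - q ^ (-m)) / (q - q⁻¹)

/-- Nonincreasing sequences (k_n, …, k₁) of nonnegative integers:
`k i` is `k_{i+1}`, so nonincreasing means `Monotone`. -/
def DescSeq (n : ℕ) : Type := {f : Fin n → ℕ // Monotone f}

/-- The vector space with basis the nonincreasing sequences. -/
def Vn (n : ℕ) : Type := DescSeq n →₀ ℂ

instance (n : ℕ) : AddCommGroup (Vn n) := Finsupp.instAddCommGroup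
instance (n : ℕ) : Module ℂ (Vn n) := Finsupp.module _ _

/-- Coefficient of the raising operator E_{i+1} (0-indexed `i`): it is 1 for
E₁ and `[k_i + 1 - k_{i-1}]_q / [k_i + 1]_q` for i > 1 (1-indexed). -/
def coeffE (q : ℂ) {n : ℕ} (i : Fin n) (k : DescSeq n) : ℂ :=
  if (i : ℕ) = 0 then 1
  else qint q ((k.1 i : ℤ) + 1
        - (k.1 ⟨(i : ℕ) - 1, Nat.lt_of_le_of_lt (Nat.sub_le _ _) i.isLt⟩ : ℤ))
      / qint q ((k.1 i : ℤ) + 1)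

/-- Image of the basis vector `k` under E_{i+1}: increment `k_{i+1}`; a sequence
that is no longer nonincreasing is interpreted as the zero vector. -/
def vecE (q : ℂ) {n : ℕ} (i : Fin n) (k : DescSeq n) : Vn n :=
  if h : Monotone (Function.update k.1 i (k.1 i + 1))
  then coeffE q i k • Finsupp.single (⟨_, h⟩ : DescSeq n) (1 : ℂ)
  else 0

/-- The operator E_{i+1} (0-indexed `i`). -/
def opE (q : ℂ) {n : ℕ} (i : Fin n) : Module.End ℂ (Vn n) :=
  Finsupp.lsum ℂ fun k => LinearMap.toSpanSingleton ℂ (Vn n) (vecE q i k)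

/-- Image of the basis vector `k` under E₀: coefficient
`a q^{1-k_n} ∏ [k_i]_q / (1-q²)`, decrementing every entry (if some `k_i = 0`
the coefficient vanishes, matching the convention that sequences with a
negative entry are zero). -/
def vecE0 (q a : ℂ) {n : ℕ} (hn : 0 < n) (k : DescSeq n) : Vn n :=
  (a * q ^ ((1 : ℤ) - (k.1 ⟨n - 1, Nat.sub_lt hn Nat.one_pos⟩ : ℤ))
      * (∏ j : Fin n, qint q (k.1 j)) / (1 - q ^ 2)) •
    Finsupp.single
      (⟨fun j => k.1 j - 1, fun _ _ hab => Nat.sub_le_sub_right (k.2 hab) 1⟩ : DescSeq n)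
      (1 : ℂ)

/-- The operator E₀. -/
def opE0 (q a : ℂ) {n : ℕ} (hn : 0 < n) : Module.End ℂ (Vn n) :=
  Finsupp.lsum ℂ fun k => LinearMap.toSpanSingleton ℂ (Vn n) (vecE0 q a hn k)

/-!
Every operator involved is a weighted shift of the basis: `E_i` raises `k_i` (or kills `k` when
the result is no longer nonincreasing) and `E₀` lowers all entries. Both sides of each relation
therefore send a basis vector `k` to multiples of one common basis vector, and the relations
become identities between coefficients. If `k₁ = 0`, then `E₀` kills `k` and everything obtained
from `k` by raising other entries. Otherwise, for `2 ≤ i ≤ n - 1` the factor `[k_i + 1]_q` that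
`E₀` picks up after `E_i` matches the denominator `[k_i]_q` of `E_i` after `E₀`. For `E_n`,
raising `k_n` also multiplies `q^{1-k_n}` by `q⁻¹`, so the three terms of the Serre relation are
one vector times `1`, `(q + q⁻¹) q⁻¹` and `q⁻²` respectively, and `1 - (q + q⁻¹) q⁻¹ + q⁻² = 0`. Since `q` is not a
root of unity, the quantum integers `[m]_q` with `m > 0` are invertible, which these
cancellations need.
-/

theorem qint_ne_zero {q : ℂ} (hq0 : q ≠ 0) (hq : ∀ m : ℕ, 0 < m → q ^ m ≠ 1) {m : ℤ}
    (hm : 0 < m) : qint q m ≠ 0 := by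
  have numerator_ne : ∀ m : ℤ, 0 < m → q ^ m - q ^ (-m) ≠ 0 := by
    intro m hm h
    have h2m : q ^ (m + m) = 1 := by
      rw [zpow_add₀ hq0]
      nth_rw 2 [sub_eq_zero.1 h]
      rw [← zpow_add₀ hq0, add_neg_cancel, zpow_zero]
    lift m to ℕ using hm.le
    exact hq (m + m) (by omega) (by exact_mod_cast h2m)
  have denominator_ne : q - q⁻¹ ≠ 0 := by
    simpa using numerator_ne 1 one_pos
  exact div_ne_zero (numerator_ne m hm) denominator_ne

def lastIdx {n : ℕ} (hn : 0 < n) : Fin n := ⟨n - 1, Nat.sub_lt hn Nat.one_pos⟩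

def prevIdx {n : ℕ} (i : Fin n) : Fin n :=
  ⟨(i : ℕ) - 1, Nat.lt_of_le_of_lt (Nat.sub_le _ _) i.isLt⟩

theorem prevIdx_ne {n : ℕ} {i : Fin n} (hi : (i : ℕ) ≠ 0) : prevIdx i ≠ i :=
  Fin.ne_of_val_ne (by simp only [prevIdx]; omega)

namespace DescSeq

variable {n : ℕ}

def CanRaise (k : DescSeq n) (i : Fin n) : Prop :=
  Monotone (Function.update k.1 i (k.1 i + 1))

def raise (k : DescSeq n) (i : Fin n) (h : k.CanRaise i) : DescSeq n := ⟨_, h⟩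

def lower (k : DescSeq n) : DescSeq n :=
  ⟨fun j => k.1 j - 1, fun _ _ hab => Nat.sub_le_sub_right (k.2 hab) 1⟩

variable {k : DescSeq n} {i j : Fin n}

@[simp]
theorem raise_apply_self (h : k.CanRaise i) : (k.raise i h).1 i = k.1 i + 1 :=
  Function.update_self _ _ _

@[simp]
theorem raise_apply_of_ne (h : k.CanRaise i) (hj : j ≠ i) : (k.raise i h).1 j = k.1 j :=
  Function.update_of_ne hj _ _

@[simp]
theorem lower_apply : k.lower.1 j = k.1 j - 1 := rfl

theorem canRaise_iff : k.CanRaise i ↔ ∀ j, i < j → k.1 i < k.1 j := by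
  constructor
  · intro h j hij
    have := h hij.le
    rwa [Function.update_self, Function.update_of_ne hij.ne'] at this
  · intro h x y hxy
    by_cases hx : x = i <;> by_cases hy : y = i
    · rw [hx, hy]
    · subst hx
      rw [Function.update_self, Function.update_of_ne hy]
      exact h y (lt_of_le_of_ne hxy (Ne.symm hy))
    · subst hy
      rw [Function.update_self, Function.update_of_ne hx]
      exact (k.2 hxy).trans (Nat.le_succ _)
    · rw [Function.update_of_ne hx, Function.update_of_ne hy]
      exact k.2 hxy

theorem canRaise_lastIdx (hn : 0 < n) : k.CanRaise (lastIdx hn) :=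
  canRaise_iff.2 fun j hj => absurd hj (Nat.le_sub_one_of_lt j.isLt).not_gt

theorem canRaise_lower_iff (hk : 0 < k.1 i) : k.lower.CanRaise i ↔ k.CanRaise i := by
  simp only [canRaise_iff, lower_apply]
  refine forall₂_congr fun j hij => ?_
  have := k.2 hij.le
  omega

theorem lower_raise (hk : 0 < k.1 i) (h : k.CanRaise i) :
    (k.raise i h).lower = k.lower.raise i ((canRaise_lower_iff hk).2 h) := by
  apply Subtype.ext
  funext j
  rcases eq_or_ne j i with rfl | hj
  · simp only [lower_apply, raise_apply_self]
    omega
  · simp only [lower_apply, raise_apply_of_ne _ hj]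

theorem pos_of_pos_zero (hn : 0 < n) (h : 0 < k.1 ⟨0, hn⟩) (j : Fin n) : 0 < k.1 j :=
  h.trans_le (k.2 (Nat.zero_le j))

theorem prod_qint_raise_mul (q : ℂ) (h : k.CanRaise i) :
    (∏ j, qint q ((k.raise i h).1 j)) * qint q (k.1 i) =
      (∏ j, qint q (k.1 j)) * qint q (k.1 i + 1) := by
  rw [← Finset.mul_prod_erase _ _ (Finset.mem_univ i),
    ← Finset.mul_prod_erase _ (fun j => qint q (k.1 j)) (Finset.mem_univ i),
    Finset.prod_congr rfl fun j hj => by rw [raise_apply_of_ne h (Finset.ne_of_mem_erase hj)]]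
  push_cast [raise_apply_self]
  ring

end DescSeq

def Vn.single {n : ℕ} (k : DescSeq n) : Vn n := Finsupp.single k 1

theorem Vn.end_ext {n : ℕ} {f g : Module.End ℂ (Vn n)}
    (h : ∀ k, f (Vn.single k) = g (Vn.single k)) : f = g :=
  Finsupp.basisSingleOne.ext h

def coeffE0 (q a : ℂ) {n : ℕ} (hn : 0 < n) (k : DescSeq n) : ℂ :=
  a * q ^ ((1 : ℤ) - (k.1 (lastIdx hn) : ℤ)) * (∏ j : Fin n, qint q (k.1 j)) / (1 - q ^ 2)

section Operators

open DescSeq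

variable {q a : ℂ} {n : ℕ} {hn : 0 < n} {k : DescSeq n} {i : Fin n}

theorem opE_single : opE q i (Vn.single k) = vecE q i k :=
  (Finsupp.lsum_single ℂ _ k 1).trans (one_smul ℂ _)

theorem opE0_single : opE0 q a hn (Vn.single k) = vecE0 q a hn k :=
  (Finsupp.lsum_single ℂ _ k 1).trans (one_smul ℂ _)

theorem vecE_of_canRaise (h : k.CanRaise i) :
    vecE q i k = coeffE q i k • Vn.single (k.raise i h) :=
  dif_pos h

theorem vecE_of_not_canRaise (h : ¬ k.CanRaise i) : vecE q i k = 0 :=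
  dif_neg h

theorem vecE0_eq : vecE0 q a hn k = coeffE0 q a hn k • Vn.single k.lower := rfl

theorem coeffE0_eq_zero {j : Fin n} (hj : k.1 j = 0) : coeffE0 q a hn k = 0 := by
  have hprod : ∏ l, qint q (k.1 l) = 0 :=
    Finset.prod_eq_zero (Finset.mem_univ j) (by simp [hj, qint])
  rw [coeffE0, hprod, mul_zero, zero_div]

theorem coeffE0_raise_eq_zero {j : Fin n} (hj : k.1 j = 0) (hji : j ≠ i) (h : k.CanRaise i) :
    coeffE0 q a hn (k.raise i h) = 0 :=
  coeffE0_eq_zero (by rwa [raise_apply_of_ne h hji])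

theorem coeffE0_raise_mul (h : k.CanRaise i) (hi : i ≠ lastIdx hn) :
    coeffE0 q a hn (k.raise i h) * qint q (k.1 i) = coeffE0 q a hn k * qint q (k.1 i + 1) := by
  simp only [coeffE0, raise_apply_of_ne h hi.symm]
  linear_combination (a * q ^ ((1 : ℤ) - (k.1 (lastIdx hn) : ℤ)) / (1 - q ^ 2)) *
    prod_qint_raise_mul q h

theorem coeffE0_raise_lastIdx_mul (hq0 : q ≠ 0) (h : k.CanRaise (lastIdx hn)) :
    coeffE0 q a hn (k.raise (lastIdx hn) h) * qint q (k.1 (lastIdx hn)) =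
      coeffE0 q a hn k * qint q (k.1 (lastIdx hn) + 1) * q⁻¹ := by
  have hpow : q ^ ((1 : ℤ) - ((k.1 (lastIdx hn) + 1 : ℕ) : ℤ)) =
      q ^ ((1 : ℤ) - (k.1 (lastIdx hn) : ℤ)) * q⁻¹ := by
    rw [← zpow_neg_one, ← zpow_add₀ hq0]
    congr 1
    push_cast
    ring
  simp only [coeffE0, raise_apply_self, hpow]
  linear_combination (a * q ^ ((1 : ℤ) - (k.1 (lastIdx hn) : ℤ)) * q⁻¹ / (1 - q ^ 2)) *
    prod_qint_raise_mul q h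

theorem coeffE_of_ne_zero (hi : (i : ℕ) ≠ 0) (k : DescSeq n) :
    coeffE q i k = qint q (k.1 i + 1 - k.1 (prevIdx i)) / qint q (k.1 i + 1) :=
  if_neg hi

theorem coeffE_raise (hi : (i : ℕ) ≠ 0) (h : k.CanRaise i) :
    coeffE q i (k.raise i h) = qint q (k.1 i + 2 - k.1 (prevIdx i)) / qint q (k.1 i + 2) := by
  rw [coeffE_of_ne_zero hi, raise_apply_self, raise_apply_of_ne h (prevIdx_ne hi)]
  push_cast
  ring_nf

theorem coeffE_lower (hi : (i : ℕ) ≠ 0) (hpos : ∀ j, 0 < k.1 j) :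
    coeffE q i k.lower = qint q (k.1 i + 1 - k.1 (prevIdx i)) / qint q (k.1 i) := by
  rw [coeffE_of_ne_zero hi, lower_apply, lower_apply]
  have := hpos i
  have := hpos (prevIdx i)
  congr 2 <;> omega

theorem coeffE_lower_raise (hi : (i : ℕ) ≠ 0) (hpos : ∀ j, 0 < k.1 j) (h : k.CanRaise i) :
    coeffE q i (k.raise i h).lower =
      qint q (k.1 i + 2 - k.1 (prevIdx i)) / qint q (k.1 i + 1) := by
  have hpos' : ∀ j, 0 < (k.raise i h).1 j := fun j => by
    rcases eq_or_ne j i with rfl | hj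
    · simp
    · simpa [hj] using hpos j
  rw [coeffE_lower hi hpos', raise_apply_self, raise_apply_of_ne h (prevIdx_ne hi)]
  push_cast
  ring_nf

theorem opE0_mul_opE_comm (hq0 : q ≠ 0) (hq : ∀ m : ℕ, 0 < m → q ^ m ≠ 1)
    (hi0 : (i : ℕ) ≠ 0) (hi : i ≠ lastIdx hn) :
    opE0 q a hn * opE q i = opE q i * opE0 q a hn := by
  refine Vn.end_ext fun k => ?_
  rw [Module.End.mul_apply, Module.End.mul_apply, opE_single, opE0_single, vecE0_eq, map_smul,
    opE_single]
  by_cases hz : k.1 ⟨0, hn⟩ = 0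
  · have h0i : (⟨0, hn⟩ : Fin n) ≠ i := Fin.ne_of_val_ne (Ne.symm hi0)
    rw [coeffE0_eq_zero hz, zero_smul]
    by_cases h : k.CanRaise i
    · rw [vecE_of_canRaise h, map_smul, opE0_single, vecE0_eq, coeffE0_raise_eq_zero hz h0i,
        zero_smul, smul_zero]
    · rw [vecE_of_not_canRaise h, map_zero]
  have hpos := pos_of_pos_zero hn (Nat.pos_of_ne_zero hz)
  by_cases h : k.CanRaise i
  · rw [vecE_of_canRaise h, vecE_of_canRaise ((canRaise_lower_iff (hpos i)).2 h), map_smul,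
      opE0_single, vecE0_eq, smul_smul, smul_smul, lower_raise (hpos i)]
    congr 1
    have hK := qint_ne_zero hq0 hq (by exact_mod_cast hpos i : (0 : ℤ) < k.1 i)
    have hK1 := qint_ne_zero hq0 hq (by positivity : (0 : ℤ) < k.1 i + 1)
    rw [coeffE_of_ne_zero hi0, coeffE_lower hi0 hpos,
      eq_div_of_mul_eq hK (coeffE0_raise_mul h hi)]
    field_simp
  · rw [vecE_of_not_canRaise h, vecE_of_not_canRaise (mt (canRaise_lower_iff (hpos i)).1 h),
      map_zero, smul_zero]

theorem opE_lastIdx_serre (hq0 : q ≠ 0) (hq : ∀ m : ℕ, 0 < m → q ^ m ≠ 1) (hn1 : n ≠ 1) :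
    opE q (lastIdx hn) * opE q (lastIdx hn) * opE0 q a hn
        - (q + q⁻¹) • (opE q (lastIdx hn) * opE0 q a hn * opE q (lastIdx hn))
        + opE0 q a hn * opE q (lastIdx hn) * opE q (lastIdx hn) = 0 := by
  have hm0 : (lastIdx hn : ℕ) ≠ 0 := by simp only [lastIdx]; omega
  have hr : ∀ l : DescSeq n, l.CanRaise (lastIdx hn) := fun _ => canRaise_lastIdx hn
  refine Vn.end_ext fun k => ?_
  simp only [LinearMap.add_apply, LinearMap.sub_apply, LinearMap.smul_apply, Module.End.mul_apply,
    LinearMap.zero_apply, opE_single, opE0_single, vecE0_eq, vecE_of_canRaise (hr _), map_smul,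
    smul_smul]
  by_cases hz : k.1 ⟨0, hn⟩ = 0
  · have h0m : (⟨0, hn⟩ : Fin n) ≠ lastIdx hn := Fin.ne_of_val_ne (Ne.symm hm0)
    rw [coeffE0_eq_zero hz, coeffE0_raise_eq_zero hz h0m,
      coeffE0_raise_eq_zero (by rwa [raise_apply_of_ne _ h0m]) h0m]
    simp
  have hpos := pos_of_pos_zero hn (Nat.pos_of_ne_zero hz)
  rw [← lower_raise (hpos _) (hr k), ← lower_raise (by simp) (hr _), ← sub_smul, ← add_smul]
  refine smul_eq_zero_of_left ?_ _
  have hK := qint_ne_zero hq0 hq (by exact_mod_cast hpos _ : (0 : ℤ) < k.1 (lastIdx hn))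
  have hK1 := qint_ne_zero hq0 hq (by positivity : (0 : ℤ) < k.1 (lastIdx hn) + 1)
  have hK2 := qint_ne_zero hq0 hq (by positivity : (0 : ℤ) < k.1 (lastIdx hn) + 2)
  have hY := coeffE0_raise_lastIdx_mul (a := a) hq0 (hr k)
  have hZ := coeffE0_raise_lastIdx_mul (a := a) hq0 (hr (k.raise (lastIdx hn) (hr k)))
  push_cast [raise_apply_self, add_assoc, one_add_one_eq_two] at hZ
  rw [coeffE_lower_raise hm0 hpos, coeffE_lower hm0 hpos, coeffE_raise hm0,
    coeffE_of_ne_zero hm0 k, eq_div_of_mul_eq hK1 hZ, eq_div_of_mul_eq hK hY]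
  field_simp
  ring

end Operators

theorem stmt18 (n : ℕ) (hn : 2 ≤ n) (q a : ℂ) (hq0 : q ≠ 0)
    (hq : ∀ m : ℕ, 0 < m → q ^ m ≠ 1) :
    (∀ i : Fin n, 1 ≤ (i : ℕ) → (i : ℕ) ≤ n - 2 →
      opE0 q a (show 0 < n by omega) * opE q i = opE q i * opE0 q a (show 0 < n by omega)) ∧
    (opE q (⟨n - 1, by omega⟩ : Fin n) * opE q ⟨n - 1, by omega⟩
          * opE0 q a (show 0 < n by omega)
        - (q + q⁻¹) • (opE q (⟨n - 1, by omega⟩ : Fin n)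
            * opE0 q a (show 0 < n by omega) * opE q ⟨n - 1, by omega⟩)
        + opE0 q a (show 0 < n by omega) * opE q (⟨n - 1, by omega⟩ : Fin n)
            * opE q ⟨n - 1, by omega⟩ = 0) := by
  refine ⟨fun i hi1 hi2 => opE0_mul_opE_comm hq0 hq (by omega) ?_,
    opE_lastIdx_serre hq0 hq (by omega)⟩
  exact Fin.ne_of_val_ne (by simp only [lastIdx]; omega)

end
end

section
/- Let A be an associative ℂ(q)-algebra with elements e₁, e₂, e₃, f₁, f₂, f₃ satisfying the type A₃ q-boson relations: f_i e_j - q^{-C_{ij}} e_j f_i = δ_{ij}/(1-q²) where C is the Cartan matrix of sl₄ (vertices 1–2–3 in a path), together with e_i e_j = e_j e_i for |i-j| > 1. Set E₀ = f₂f₁f₃ - q f₁f₂f₃ - q f₃f₂f₁ + q² f₃f₁f₂ (i.e., E₀ = [[f₂,f₃]_q, f₁]_q with [x,y]_q = xy - qyx). Then E₀ e₂ = e₂ E₀. -/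
/-- The Cartan matrix of sl₄. -/
def cartanA3 : Matrix (Fin 3) (Fin 3) ℤ := !![2, -1, 0; -1, 2, -1; 0, -1, 2]

/--
Type A₃ q-boson relations (0-indexed: `e 0, e 1, e 2` are e₁, e₂, e₃):
`f_i e_j - q^{-C_{ij}} e_j f_i = δ_{ij}/(1-q²)`, together with
`e_i e_j = e_j e_i` for |i-j| > 1.  Then
`E₀ = [[f₂, f₃]_q, f₁]_q = f₂f₁f₃ - q f₁f₂f₃ - q f₃f₂f₁ + q² f₃f₁f₂`
commutes with `e₂`.
-/
theorem stmt19 (A : Type*) [Ring A] [Algebra (RatFunc ℂ) A]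
    (e f : Fin 3 → A)
    (hqb : ∀ i j : Fin 3,
      f i * e j - ((RatFunc.X : RatFunc ℂ) ^ (-(cartanA3 i j))) • (e j * f i)
        = if i = j then algebraMap (RatFunc ℂ) A ((1 - RatFunc.X ^ 2)⁻¹) else 0)
    (hcomm : e 0 * e 2 = e 2 * e 0) :
    (f 1 * f 0 * f 2 - (RatFunc.X : RatFunc ℂ) • (f 0 * f 1 * f 2)
        - (RatFunc.X : RatFunc ℂ) • (f 2 * f 1 * f 0)
        + ((RatFunc.X : RatFunc ℂ) ^ 2) • (f 2 * f 0 * f 1)) * e 1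
      = e 1 *
        (f 1 * f 0 * f 2 - (RatFunc.X : RatFunc ℂ) • (f 0 * f 1 * f 2)
          - (RatFunc.X : RatFunc ℂ) • (f 2 * f 1 * f 0)
          + ((RatFunc.X : RatFunc ℂ) ^ 2) • (f 2 * f 0 * f 1)) := by
  set q : RatFunc ℂ := RatFunc.X with hqdef
  have hq0 : q ≠ 0 := RatFunc.X_ne_zero
  set c : A := algebraMap (RatFunc ℂ) A ((1 - q ^ 2)⁻¹) with hcdef
  have hcc : ∀ x : A, x * c = c * x := fun x => (Algebra.commutes _ _).symm
  have hmid : ∀ x y : A, x * (c * y) = c * (x * y) := by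
    intro x y; rw [← mul_assoc, hcc, mul_assoc]
  have h0 : f 0 * e 1 = q • (e 1 * f 0) := by
    have h := hqb 0 1
    rw [if_neg (by decide)] at h
    norm_num [cartanA3] at h
    rw [sub_eq_zero] at h
    simpa using h
  have h2 : f 2 * e 1 = q • (e 1 * f 2) := by
    have h := hqb 2 1
    rw [if_neg (by decide)] at h
    norm_num [cartanA3] at h
    rw [sub_eq_zero] at h
    simpa using h
  have h1 : (q ^ 2) • (f 1 * e 1) = e 1 * f 1 + (q ^ 2) • c := by
    have h := hqb 1 1
    rw [if_pos rfl] at h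
    norm_num [cartanA3] at h
    have h' : f 1 * e 1 = (q ^ 2)⁻¹ • (e 1 * f 1) + c := by rw [sub_eq_iff_eq_add.mp h]; exact add_comm _ _
    rw [h', smul_add, smul_smul, mul_inv_cancel₀ (pow_ne_zero 2 hq0), one_smul]
  have h0x : ∀ x : A, f 0 * (e 1 * x) = q • (e 1 * (f 0 * x)) := by
    intro x; rw [← mul_assoc, h0, smul_mul_assoc, mul_assoc]
  have h2x : ∀ x : A, f 2 * (e 1 * x) = q • (e 1 * (f 2 * x)) := by
    intro x; rw [← mul_assoc, h2, smul_mul_assoc, mul_assoc]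
  have h1x : ∀ x : A, (q ^ 2) • (f 1 * (e 1 * x)) = e 1 * (f 1 * x) + (q ^ 2) • (c * x) := by
    intro x
    have := congrArg (· * x) h1
    simpa [smul_mul_assoc, add_mul, mul_assoc] using this
  have t1 : f 1 * (f 0 * (f 2 * e 1))
      = e 1 * (f 1 * (f 0 * f 2)) + (q ^ 2) • (c * (f 0 * f 2)) := by
    calc f 1 * (f 0 * (f 2 * e 1))
        = q • (f 1 * (f 0 * (e 1 * f 2))) := by
          rw [h2, mul_smul_comm, mul_smul_comm]
      _ = (q * q) • (f 1 * (e 1 * (f 0 * f 2))) := by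
          rw [h0x, mul_smul_comm, smul_smul]
      _ = (q ^ 2) • (f 1 * (e 1 * (f 0 * f 2))) := by rw [sq]
      _ = e 1 * (f 1 * (f 0 * f 2)) + (q ^ 2) • (c * (f 0 * f 2)) := h1x _
  have t2 : q • (f 0 * (f 1 * (f 2 * e 1)))
      = q • (e 1 * (f 0 * (f 1 * f 2))) + (q ^ 2) • (c * (f 0 * f 2)) := by
    calc q • (f 0 * (f 1 * (f 2 * e 1)))
        = (q * q) • (f 0 * (f 1 * (e 1 * f 2))) := by
          rw [h2, mul_smul_comm, mul_smul_comm, smul_smul]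
      _ = f 0 * ((q ^ 2) • (f 1 * (e 1 * f 2))) := by rw [sq, mul_smul_comm]
      _ = f 0 * (e 1 * (f 1 * f 2)) + (q ^ 2) • (f 0 * (c * f 2)) := by
          rw [h1x, mul_add, mul_smul_comm]
      _ = q • (e 1 * (f 0 * (f 1 * f 2))) + (q ^ 2) • (c * (f 0 * f 2)) := by
          rw [h0x, hmid]
  have t3 : q • (f 2 * (f 1 * (f 0 * e 1)))
      = q • (e 1 * (f 2 * (f 1 * f 0))) + (q ^ 2) • (c * (f 2 * f 0)) := by
    calc q • (f 2 * (f 1 * (f 0 * e 1)))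
        = (q * q) • (f 2 * (f 1 * (e 1 * f 0))) := by
          rw [h0, mul_smul_comm, mul_smul_comm, smul_smul]
      _ = f 2 * ((q ^ 2) • (f 1 * (e 1 * f 0))) := by rw [sq, mul_smul_comm]
      _ = f 2 * (e 1 * (f 1 * f 0)) + (q ^ 2) • (f 2 * (c * f 0)) := by
          rw [h1x, mul_add, mul_smul_comm]
      _ = q • (e 1 * (f 2 * (f 1 * f 0))) + (q ^ 2) • (c * (f 2 * f 0)) := by
          rw [h2x, hmid]
  have t4 : (q ^ 2) • (f 2 * (f 0 * (f 1 * e 1)))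
      = (q ^ 2) • (e 1 * (f 2 * (f 0 * f 1))) + (q ^ 2) • (c * (f 2 * f 0)) := by
    calc (q ^ 2) • (f 2 * (f 0 * (f 1 * e 1)))
        = f 2 * (f 0 * ((q ^ 2) • (f 1 * e 1))) := by
          rw [mul_smul_comm, mul_smul_comm]
      _ = f 2 * (f 0 * (e 1 * f 1)) + (q ^ 2) • (f 2 * (f 0 * c)) := by
          rw [h1, mul_add, mul_add, mul_smul_comm, mul_smul_comm]
      _ = q • (f 2 * (e 1 * (f 0 * f 1))) + (q ^ 2) • (c * (f 2 * f 0)) := by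
          rw [h0x, mul_smul_comm, hcc (f 0), hmid]
      _ = (q * q) • (e 1 * (f 2 * (f 0 * f 1))) + (q ^ 2) • (c * (f 2 * f 0)) := by
          rw [h2x, smul_smul]
      _ = (q ^ 2) • (e 1 * (f 2 * (f 0 * f 1))) + (q ^ 2) • (c * (f 2 * f 0)) := by rw [sq]
  simp only [sub_mul, add_mul, smul_mul_assoc, mul_sub, mul_add, mul_smul_comm, mul_assoc]
  rw [t1, t2, t3, t4]
  abel
end
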